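/- arXiv:math/0401416 — 5 statements merged into one kernel-verified Lean document; each statement's English description precedes it below -/
import Mathlib

section
/- Let R_3(x_1,x_2,x_3) = 72 x_1 x_2 x_3 - 4(x_1+x_2+x_3) + 4(x_1+x_2+x_3)^2 - 8(x_1x_2+x_2x_3+x_1x_3) + 1. Then |R_3(x)| ≤ 1 for all x in the simplex T^3 = {x ∈ ℝ³ : x_1 ≥ 0, x_2 ≥ 0, x_3 ≥ 0, x_1+x_2+x_3 ≤ 1}. -/
noncomputable def R3 (x₁ x₂ x₃ : ℝ) : ℝ :=
  72 * x₁ * x₂ * x₃ - 4 * (x₁ + x₂ + x₃) + 4 * (x₁ + x₂ + x₃) ^ 2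
    - 8 * (x₁ * x₂ + x₂ * x₃ + x₁ * x₃) + 1

/-- `|R₃(x)| ≤ 1` on the standard simplex `T³`. -/
theorem abs_R3_le_one_on_simplex (x₁ x₂ x₃ : ℝ) (h₁ : 0 ≤ x₁) (h₂ : 0 ≤ x₂)
    (h₃ : 0 ≤ x₃) (hsum : x₁ + x₂ + x₃ ≤ 1) :
    |R3 x₁ x₂ x₃| ≤ 1 := by
  have hu : (0:ℝ) ≤ 1 - (x₁ + x₂ + x₃) := by linarith
  rw [abs_le, R3]
  constructor
  · -- R3 + 1 = 48x₁x₂x₃ + 2u³ + ½Σ xᵢ(2xᵢ-1)² + (3/2)Σ xₖ(2xᵢ+2xⱼ-1)²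
    nlinarith [mul_nonneg (mul_nonneg h₁ h₂) h₃,
      mul_nonneg (mul_nonneg hu hu) hu,
      mul_nonneg h₁ (sq_nonneg (2*x₁ - 1)),
      mul_nonneg h₂ (sq_nonneg (2*x₂ - 1)),
      mul_nonneg h₃ (sq_nonneg (2*x₃ - 1)),
      mul_nonneg h₃ (sq_nonneg (2*x₁ + 2*x₂ - 1)),
      mul_nonneg h₁ (sq_nonneg (2*x₂ + 2*x₃ - 1)),
      mul_nonneg h₂ (sq_nonneg (2*x₁ + 2*x₃ - 1))]
  · -- 1 - R3 = 4u·p₂ + 16u·e₂ + 4u²s + 8Σ xₖ(xᵢ-xⱼ)²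
    nlinarith [mul_nonneg hu (sq_nonneg x₁), mul_nonneg hu (sq_nonneg x₂),
      mul_nonneg hu (sq_nonneg x₃),
      mul_nonneg hu (mul_nonneg h₁ h₂), mul_nonneg hu (mul_nonneg h₂ h₃),
      mul_nonneg hu (mul_nonneg h₁ h₃),
      mul_nonneg (mul_nonneg hu hu) h₁, mul_nonneg (mul_nonneg hu hu) h₂,
      mul_nonneg (mul_nonneg hu hu) h₃,
      mul_nonneg h₃ (sq_nonneg (x₁ - x₂)), mul_nonneg h₁ (sq_nonneg (x₂ - x₃)),
      mul_nonneg h₂ (sq_nonneg (x₁ - x₃))]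
end

section
/- For every polynomial p in three variables of total degree at most 2, the supremum of |x_1 x_2 x_3 - p(x)| over the simplex T^3 = {x : x_i ≥ 0, x_1+x_2+x_3 ≤ 1} is at least 1/72. -/
/-!
Duality: a signed measure `μ` of total variation `1` that annihilates all polynomials of
degree at most `2` gives `|μ(x₁x₂x₃)| = |μ(x₁x₂x₃ - p)| ≤ sup_{T³} |x₁x₂x₃ - p|` for every such `p`.
One such `μ` puts weight `1/24` on each vertex of `T³`, `-1/6` on each edge midpoint and `3/8`
on the centroid; it gives `x₁x₂x₃` the mass `(3/8)·(1/3)³ = 1/72`.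
-/

def simplexT3 : Set (Fin 3 → ℝ) := {x | (∀ i, 0 ≤ x i) ∧ x 0 + x 1 + x 2 ≤ 1}

open MvPolynomial Finset

section WeightedSum

variable {ι : Type*} [Fintype ι]

theorem abs_sum_mul_le_sum_abs_mul_sSup {α : Type*} {S : Set α} {g : α → ℝ}
    (hg : BddAbove ((fun x => |g x|) '' S)) (w : ι → ℝ) {z : ι → α} (hz : ∀ i, z i ∈ S) :
    |∑ i, w i * g (z i)| ≤ (∑ i, |w i|) * sSup ((fun x => |g x|) '' S) := by
  calc |∑ i, w i * g (z i)| ≤ ∑ i, |w i| * |g (z i)| := by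
        simpa only [abs_mul] using abs_sum_le_sum_abs (fun i => w i * g (z i)) univ
    _ ≤ ∑ i, |w i| * sSup ((fun x => |g x|) '' S) :=
        sum_le_sum fun i _ =>
          mul_le_mul_of_nonneg_left (le_csSup hg ⟨z i, hz i, rfl⟩) (abs_nonneg _)
    _ = (∑ i, |w i|) * sSup ((fun x => |g x|) '' S) := (sum_mul ..).symm

theorem sum_mul_eval_eq_zero_of_totalDegree_le {σ : Type*} [Fintype σ] {n : ℕ}
    {w : ι → ℝ} {z : ι → σ → ℝ}
    (hexact : ∀ d : σ →₀ ℕ, d.degree ≤ n → ∑ i, w i * ∏ j, z i j ^ d j = 0)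
    {p : MvPolynomial σ ℝ} (hp : p.totalDegree ≤ n) :
    ∑ i, w i * eval (z i) p = 0 := by
  simp only [eval_eq', mul_sum]
  rw [sum_comm]
  refine sum_eq_zero fun d hd => ?_
  have hdeg : d.degree ≤ n := by
    rw [Finsupp.degree_apply]
    exact (le_totalDegree hd).trans hp
  simp only [mul_left_comm (w _), ← mul_sum, hexact d hdeg, mul_zero]

end WeightedSum

theorem isCompact_simplexT3 : IsCompact simplexT3 := by
  refine Metric.isCompact_of_isClosed_isBounded ?_
    ((Metric.isBounded_Icc (0 : Fin 3 → ℝ) 1).subset ?_)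
  · exact isClosed_Ici.inter
      (isClosed_le (f := fun x : Fin 3 → ℝ => x 0 + x 1 + x 2) (by fun_prop) continuous_const)
  · rintro x ⟨hnonneg, hsum⟩
    have := hnonneg 0; have := hnonneg 1; have := hnonneg 2
    refine ⟨hnonneg, fun i => ?_⟩
    fin_cases i <;> simp <;> linarith

noncomputable def simplexT3Nodes : Fin 7 → Fin 3 → ℝ :=
  ![![1, 0, 0], ![0, 1, 0], ![0, 0, 1],
    ![1/2, 1/2, 0], ![1/2, 0, 1/2], ![0, 1/2, 1/2], ![1/3, 1/3, 1/3]]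

noncomputable def simplexT3Weights : Fin 7 → ℝ :=
  ![1/24, 1/24, 1/24, -1/6, -1/6, -1/6, 3/8]

theorem simplexT3Nodes_mem (i : Fin 7) : simplexT3Nodes i ∈ simplexT3 := by
  refine ⟨fun j => ?_, ?_⟩ <;> fin_cases i <;> try fin_cases j
  all_goals simp [simplexT3Nodes] <;> norm_num

theorem sum_abs_simplexT3Weights : ∑ i, |simplexT3Weights i| = 1 := by
  simp only [Fin.sum_univ_seven, simplexT3Weights, Matrix.cons_val]
  norm_num [abs_of_neg]

theorem sum_simplexT3Weights_mul_monomial_eq_zero (d : Fin 3 →₀ ℕ) (hd : d.degree ≤ 2) :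
    ∑ i, simplexT3Weights i * ∏ j, simplexT3Nodes i j ^ d j = 0 := by
  rw [Finsupp.degree_eq_sum, Fin.sum_univ_three] at hd
  have h0 : d 0 ≤ 2 := by omega
  have h1 : d 1 ≤ 2 := by omega
  have h2 : d 2 ≤ 2 := by omega
  simp only [Fin.sum_univ_seven, Fin.prod_univ_three, simplexT3Weights, simplexT3Nodes,
    Matrix.cons_val]
  interval_cases d 0 <;> interval_cases d 1 <;> interval_cases d 2 <;> first | omega | norm_num

theorem sum_simplexT3Weights_mul_prod : ∑ i, simplexT3Weights i *
    (simplexT3Nodes i 0 * simplexT3Nodes i 1 * simplexT3Nodes i 2) = 1 / 72 := by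
  simp only [Fin.sum_univ_seven, simplexT3Weights, simplexT3Nodes, Matrix.cons_val]
  norm_num

/-- For every polynomial `p` of total degree at most `2`, the supremum of
`|x₁x₂x₃ - p(x)|` over `T³` is at least `1/72`. -/
theorem best_approx_lower_bound_T3 (p : MvPolynomial (Fin 3) ℝ)
    (hp : p.totalDegree ≤ 2) :
    1 / 72 ≤ sSup ((fun x => |x 0 * x 1 * x 2 - MvPolynomial.eval x p|) '' simplexT3) := by
  set g : (Fin 3 → ℝ) → ℝ := fun x => x 0 * x 1 * x 2 - eval x p
  have hbdd : BddAbove ((fun x => |g x|) '' simplexT3) :=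
    (isCompact_simplexT3.image ((Continuous.sub (by fun_prop) (continuous_eval p)).abs)).bddAbove
  have hannihilate : ∑ i, simplexT3Weights i * eval (simplexT3Nodes i) p = 0 :=
    sum_mul_eval_eq_zero_of_totalDegree_le sum_simplexT3Weights_mul_monomial_eq_zero hp
  have hpairing : ∑ i, simplexT3Weights i * g (simplexT3Nodes i) = 1 / 72 := by
    simp only [g, mul_sub, sum_sub_distrib, hannihilate, sum_simplexT3Weights_mul_prod, sub_zero]
  calc (1 / 72 : ℝ) = |∑ i, simplexT3Weights i * g (simplexT3Nodes i)| := by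
        rw [hpairing]; norm_num
    _ ≤ (∑ i, |simplexT3Weights i|) * sSup ((fun x => |g x|) '' simplexT3) :=
        abs_sum_mul_le_sum_abs_mul_sSup hbdd _ simplexT3Nodes_mem
    _ = sSup ((fun x => |g x|) '' simplexT3) := by rw [sum_abs_simplexT3Weights, one_mul]
end

section
/- For integers 4 ≤ k ≤ d with k < d, setting b_j = d C(d,j) j^{d-1}, one has ∑_{j=k}^{d} b_j (-1)^{j-k} C(j,k) j^{-k} = 0, while for k = d the sum equals 1. -/
/-!
Since `C(d,j) C(j,k) = C(d,k) C(d-k,j-k)` and `j^(d-1) / j^k = j^(d-1-k)`, for `k < d` the sum is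
`d C(d,k)` times `∑_{i ≤ d-k} (-1)^i C(d-k,i) (k+i)^(d-1-k)`, the `(d-k)`-th forward difference
at `k` of a polynomial of degree `d-1-k < d-k`, which vanishes. For `k = d` only `j = d` remains,
and it contributes `d · d^(d-1) / d^d = 1`.
-/

open Finset

lemma neg_one_pow_mul_neg_one_pow_sub {R : Type*} [Monoid R] [HasDistribNeg R] {i n : ℕ}
    (h : i ≤ n) : (-1 : R) ^ n * (-1) ^ (n - i) = (-1) ^ i := by
  rw [← pow_add, show n + (n - i) = i + 2 * (n - i) by omega, pow_add, pow_mul, neg_one_sq,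
    one_pow, mul_one]

theorem sum_range_neg_one_pow_mul_choose_mul_pow_eq_zero {R : Type*} [CommRing R] (y : R)
    {m n : ℕ} (h : m < n) :
    ∑ i ∈ range (n + 1), (-1 : R) ^ i * n.choose i * (y + i) ^ m = 0 := by
  have hdiff := fwdDiff_iter_eq_sum_shift (1 : R) (fun r ↦ r ^ m) n y
  rw [fwdDiff_iter_pow_eq_zero_of_lt h, Pi.zero_apply] at hdiff
  push_cast [zsmul_eq_mul, nsmul_eq_mul, mul_one] at hdiff
  calc ∑ i ∈ range (n + 1), (-1 : R) ^ i * n.choose i * (y + i) ^ m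
      = (-1) ^ n * ∑ i ∈ range (n + 1), (-1) ^ (n - i) * n.choose i * (y + i) ^ m := by
        rw [mul_sum]
        refine sum_congr rfl fun i hi ↦ ?_
        rw [← mul_assoc, ← mul_assoc, neg_one_pow_mul_neg_one_pow_sub (mem_range_succ_iff.mp hi)]
    _ = 0 := by rw [← hdiff, mul_zero]

theorem sum_Icc_neg_one_pow_mul_choose_mul_pow_eq_zero {R : Type*} [CommRing R]
    {k d m : ℕ} (hkd : k ≤ d) (hm : m < d - k) :
    ∑ j ∈ Icc k d, (-1 : R) ^ (j - k) * (d - k).choose (j - k) * (j : R) ^ m = 0 := by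
  rw [← Ico_add_one_right_eq_Icc, sum_Ico_eq_sum_range, show d + 1 - k = d - k + 1 by omega]
  simp only [Nat.add_sub_cancel_left, Nat.cast_add]
  exact sum_range_neg_one_pow_mul_choose_mul_pow_eq_zero (k : R) hm

lemma choose_mul_choose_mul_pow_mul_inv_pow {K : Type*} [Field K] {d j k : ℕ} (hkj : k ≤ j)
    (hkd : k < d) (hj : (j : K) ≠ 0) :
    (d.choose j : K) * j.choose k * (j : K) ^ (d - 1) * ((j : K) ^ k)⁻¹ =
      d.choose k * (d - k).choose (j - k) * (j : K) ^ (d - 1 - k) := by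
  have hchoose : (d.choose j : K) * j.choose k = d.choose k * (d - k).choose (j - k) := by
    rw [← Nat.cast_mul, ← Nat.cast_mul, Nat.choose_mul hkj]
  have hpow : (j : K) ^ (d - 1) = (j : K) ^ (d - 1 - k) * (j : K) ^ k := by
    rw [← pow_add, Nat.sub_add_cancel (by omega)]
  rw [hchoose, hpow, ← mul_assoc, mul_inv_cancel_right₀ (pow_ne_zero k hj)]

/-- The inversion identity `J_{k,d} = δ_{k,d}`: with `b_j = d C(d,j) j^{d-1}`, for
`4 ≤ k ≤ d` one has `∑_{j=k}^{d} b_j (-1)^{j-k} C(j,k) j^{-k} = 0` if `k < d`, and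
the sum equals `1` if `k = d`. -/
theorem inversion_identity (d k : ℕ) (hk : 4 ≤ k) (hkd : k ≤ d) :
    ∑ j ∈ Finset.Icc k d,
        ((d : ℝ) * (d.choose j : ℝ) * (j : ℝ) ^ (d - 1)) * (-1 : ℝ) ^ (j - k) *
          (j.choose k : ℝ) * ((j : ℝ) ^ k)⁻¹ =
      if k = d then 1 else 0 := by
  rcases hkd.eq_or_lt with rfl | hlt
  · have hk0 : (k : ℝ) ≠ 0 := Nat.cast_ne_zero.mpr (by omega)
    rw [if_pos rfl, Icc_self, sum_singleton, Nat.choose_self, Nat.sub_self, pow_zero,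
      Nat.cast_one, mul_one, mul_one, mul_one, ← pow_succ',
      Nat.sub_add_cancel (by omega), mul_inv_cancel₀ (pow_ne_zero k hk0)]
  · rw [if_neg hlt.ne]
    calc _ = ∑ j ∈ Icc k d, (d : ℝ) * d.choose k *
            ((-1) ^ (j - k) * (d - k).choose (j - k) * (j : ℝ) ^ (d - 1 - k)) := by
          refine sum_congr rfl fun j hj ↦ ?_
          have hkj := (mem_Icc.mp hj).1
          have hj0 : (j : ℝ) ≠ 0 := Nat.cast_ne_zero.mpr (by omega)
          linear_combination (d : ℝ) * (-1) ^ (j - k) *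
            choose_mul_choose_mul_pow_mul_inv_pow hkj hlt hj0
      _ = 0 := by
          rw [← mul_sum, sum_Icc_neg_one_pow_mul_choose_mul_pow_eq_zero hkd (by omega), mul_zero]
end

section
/- Define L g = ∑_{j=1}^{d} (-1)^{d-j} j^{d-1} ∑_{τ} g(a_j τ), where a_j = (1/j,...,1/j,0,...,0) ∈ ℝ^d has exactly j nonzero entries and the inner sum runs over all distinct permutations of a_j. Then L p = 0 for every polynomial p in d variables of total degree at most d-1. -/
/-!
The functional is linear, so it suffices to treat a monomial `x^α` of degree `k ≤ d - 1` whose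
support has `m ≤ k` elements. At the point `1_s / j` the monomial equals `j^(-k)` if
`supp α ⊆ s` and `0` otherwise, and `C(d - m, j - m)` of the `j`-sets contain `supp α`.
Hence the functional takes the value `∑ᵢ (-1)^(d-m-i) C(d-m, i) (m+i)^(d-1-k)`, the
`(d - m)`-th forward difference of `x ↦ x^(d-1-k)` at `m`, which vanishes since `d-1-k < d-m`.
-/

open Finset MvPolynomial fwdDiff

theorem sum_range_neg_one_pow_mul_choose_mul_add_pow_eq_zero {R : Type*} [CommRing R]
    {n e : ℕ} (he : e < n) (y : R) :
    ∑ i ∈ range (n + 1), (-1 : R) ^ (n - i) * n.choose i * (y + i) ^ e = 0 := by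
  have h := fwdDiff_iter_eq_sum_shift (h := (1 : R)) (fun r ↦ r ^ e) n y
  rw [fwdDiff_iter_pow_eq_zero_of_lt he, Pi.zero_apply] at h
  rw [h]
  refine sum_congr rfl fun i _ ↦ ?_
  simp [zsmul_eq_mul]

theorem Finsupp.card_support_le_degree {σ : Type*} (α : σ →₀ ℕ) : #α.support ≤ α.degree := by
  rw [Finsupp.degree_apply]
  simpa using card_nsmul_le_sum α.support α 1 fun i hi ↦
    Nat.one_le_iff_ne_zero.2 (Finsupp.mem_support_iff.1 hi)

theorem sum_range_card_supersets_nsmul {σ M : Type*} [DecidableEq σ] [Fintype σ]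
    [AddCommMonoid M] (S : Finset σ) (g : ℕ → M) :
    ∑ j ∈ range (Fintype.card σ + 1), #{s ∈ univ.powersetCard j | S ⊆ s} • g j =
      ∑ i ∈ range (Fintype.card σ - #S + 1), (Fintype.card σ - #S).choose i • g (#S + i) := by
  have hS : #S ≤ Fintype.card σ := card_le_univ S
  rw [show Fintype.card σ + 1 = #S + (Fintype.card σ - #S + 1) by omega, sum_range_add,
    sum_eq_zero fun j hj ↦ ?_, zero_add]
  · refine sum_congr rfl fun i _ ↦ ?_
    rw [card_filter_powersetCard_subset S univ _ (subset_univ S) (by omega), card_univ,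
      Nat.add_sub_cancel_left]
  · rw [card_eq_zero.2 (filter_eq_empty_iff.2 fun s hs hSs ↦ ?_), zero_smul]
    have hcard := card_le_card hSs
    rw [(mem_powersetCard.1 hs).2] at hcard
    have := mem_range.1 hj
    omega

theorem LinearMap.map_eq_zero_of_totalDegree_le {σ R M : Type*} [CommSemiring R]
    [AddCommMonoid M] [Module R M] (φ : MvPolynomial σ R →ₗ[R] M) {k : ℕ}
    (h : ∀ α : σ →₀ ℕ, α.degree ≤ k → φ (monomial α 1) = 0)
    {p : MvPolynomial σ R} (hp : p.totalDegree ≤ k) : φ p = 0 := by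
  rw [p.as_sum, map_sum]
  refine sum_eq_zero fun α hα ↦ ?_
  rw [← mul_one (coeff α p), ← smul_eq_mul, ← smul_monomial, map_smul,
    h α ((le_totalDegree hα).trans hp), smul_zero]

theorem eval_indicator_monomial {σ R : Type*} [CommSemiring R] [DecidableEq σ]
    (s : Finset σ) (c : R) (α : σ →₀ ℕ) :
    eval (fun i ↦ if i ∈ s then c else 0) (monomial α 1) =
      if α.support ⊆ s then c ^ α.degree else 0 := by
  rw [eval_monomial, one_mul, Finsupp.prod]
  split_ifs with hs
  · rw [prod_congr rfl fun i hi ↦ by rw [if_pos (hs hi)], prod_pow_eq_pow_sum]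
    rfl
  · obtain ⟨i, hi, his⟩ := not_subset.1 hs
    exact prod_eq_zero hi (by rw [if_neg his, zero_pow (Finsupp.mem_support_iff.1 hi)])

theorem sum_powersetCard_eval_indicator_monomial {σ R : Type*} [CommSemiring R] [DecidableEq σ]
    [Fintype σ] (j : ℕ) (c : R) (α : σ →₀ ℕ) :
    ∑ s ∈ univ.powersetCard j, eval (fun i ↦ if i ∈ s then c else 0) (monomial α 1) =
      #{s ∈ univ.powersetCard j | α.support ⊆ s} * c ^ α.degree := by
  simp_rw [eval_indicator_monomial, ← sum_filter, sum_const, nsmul_eq_mul]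

noncomputable def simplexFaceFunctional (d : ℕ) : MvPolynomial (Fin d) ℝ →ₗ[ℝ] ℝ :=
  ∑ j ∈ Icc 1 d, ((-1 : ℝ) ^ (d - j) * (j : ℝ) ^ (d - 1)) •
    ∑ s ∈ univ.powersetCard j, (aeval fun i ↦ if i ∈ s then 1 / (j : ℝ) else 0).toLinearMap

theorem simplexFaceFunctional_apply (d : ℕ) (p : MvPolynomial (Fin d) ℝ) :
    simplexFaceFunctional d p =
      ∑ j ∈ Icc 1 d, (-1 : ℝ) ^ (d - j) * (j : ℝ) ^ (d - 1) *
        ∑ s ∈ univ.powersetCard j, eval (fun i ↦ if i ∈ s then 1 / (j : ℝ) else 0) p := by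
  simp [simplexFaceFunctional, LinearMap.sum_apply]

theorem simplexFaceFunctional_monomial {d : ℕ} (hd : 2 ≤ d) (α : Fin d →₀ ℕ)
    (hα : α.degree ≤ d - 1) : simplexFaceFunctional d (monomial α 1) = 0 := by
  set m := #α.support
  set e := d - 1 - α.degree with he_def
  set N : ℕ → ℕ := fun j ↦ #{s ∈ univ.powersetCard j | α.support ⊆ s}
  set g : ℕ → ℝ := fun j ↦ (-1) ^ (d - j) * (j : ℝ) ^ e
  have hterm : ∀ j ∈ Icc 1 d,
      (-1 : ℝ) ^ (d - j) * (j : ℝ) ^ (d - 1) * (N j * (1 / (j : ℝ)) ^ α.degree) = N j • g j := by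
    intro j hj
    have hj : (j : ℝ) ≠ 0 := by have := (mem_Icc.1 hj).1; positivity
    rw [show d - 1 = e + α.degree by omega, nsmul_eq_mul, pow_add, one_div, inv_pow]
    field_simp
    ring
  -- `g 0 ≠ 0` forces `e = 0`, i.e. `α.degree = d - 1 ≥ 1`, and then `∅ ⊉ α.support`.
  have hzero : N 0 • g 0 = 0 := by
    rcases Nat.eq_zero_or_pos e with he | he
    · have : α.support ≠ ∅ := by
        rw [Ne, Finsupp.support_eq_empty, ← Finsupp.degree_eq_zero_iff]
        omega
      simp [N, this]
    · simp [g, zero_pow he.ne']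
  calc simplexFaceFunctional d (monomial α 1)
      = ∑ j ∈ Icc 1 d, N j • g j := by
        simp_rw [simplexFaceFunctional_apply, sum_powersetCard_eval_indicator_monomial]
        exact sum_congr rfl hterm
    _ = ∑ j ∈ range (d + 1), N j • g j := by
        rw [range_eq_Ico, sum_eq_sum_Ico_succ_bot (by omega : 0 < d + 1), zero_add,
          Ico_add_one_right_eq_Icc, hzero, zero_add]
    _ = ∑ i ∈ range (d - m + 1), (d - m).choose i • g (m + i) := by
        simpa using sum_range_card_supersets_nsmul α.support g
    _ = 0 := by
        rw [← sum_range_neg_one_pow_mul_choose_mul_add_pow_eq_zero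
          (show e < d - m by have := α.card_support_le_degree; omega) (m : ℝ)]
        refine sum_congr rfl fun i _ ↦ ?_
        simp only [g, nsmul_eq_mul, Nat.sub_sub]
        push_cast
        ring

/-- The functional `L g = ∑_{j=1}^{d} (-1)^{d-j} j^{d-1} ∑_τ g(a_j τ)`, where
`a_j = (1/j,…,1/j,0,…,0)` has exactly `j` nonzero entries and the inner sum runs over
all distinct permutations of `a_j` (equivalently over the `j`-element subsets of the
coordinates), annihilates every polynomial of total degree at most `d - 1`. -/
theorem L_annihilates_deg_le_d_sub_one (d : ℕ) (hd : 3 ≤ d)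
    (p : MvPolynomial (Fin d) ℝ) (hp : p.totalDegree ≤ d - 1) :
    ∑ j ∈ Finset.Icc 1 d, (-1 : ℝ) ^ (d - j) * (j : ℝ) ^ (d - 1) *
        ∑ s ∈ Finset.univ.powersetCard j,
          MvPolynomial.eval (fun i => if i ∈ s then 1 / (j : ℝ) else 0) p = 0 := by
  rw [← simplexFaceFunctional_apply]
  exact (simplexFaceFunctional d).map_eq_zero_of_totalDegree_le
    (fun α hα ↦ simplexFaceFunctional_monomial (by omega) α hα) hp
end

section
/- For d ≥ 3 and every polynomial p in d variables of total degree at most d-1, the supremum of |x_1 x_2 ⋯ x_d - p(x)| over the simplex T^d = {x : x_i ≥ 0, ∑ x_i ≤ 1} is at least 1/r_d, where r_d = d ∑_{k=4}^{d} k^{d-3} C(d,k)[(-1)^k(9k²-32k+24) + k²]. -/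
open Finset

lemma diff_step (n : ℕ) (g : ℕ → ℝ) :
    ∑ i ∈ range (n+2), (-1:ℝ)^i * ((n+1).choose i : ℝ) * g i
      = ∑ i ∈ range (n+1), (-1:ℝ)^i * (n.choose i : ℝ) * (g i - g (i+1)) := by
  have e1 : ∀ k, (-1:ℝ)^(k+1) * ((n+1).choose (k+1) : ℝ) * g (k+1)
      = (-1:ℝ)^(k+1) * (n.choose k : ℝ) * g (k+1)
        + (-1:ℝ)^(k+1) * (n.choose (k+1) : ℝ) * g (k+1) := by
    intro k; rw [Nat.choose_succ_succ']; push_cast; ring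
  have hL : ∑ i ∈ range (n+2), (-1:ℝ)^i * ((n+1).choose i : ℝ) * g i
      = (∑ k ∈ range (n+1), (-1:ℝ)^(k+1) * (n.choose k : ℝ) * g (k+1))
        + (∑ k ∈ range (n+1), (-1:ℝ)^(k+1) * (n.choose (k+1) : ℝ) * g (k+1)) + g 0 := by
    rw [Finset.sum_range_succ' (fun i => (-1:ℝ)^i * ((n+1).choose i : ℝ) * g i) (n+1)]
    rw [Finset.sum_congr rfl (fun k _ => e1 k), Finset.sum_add_distrib]
    simp
  have hR1 : ∑ i ∈ range (n+1), (-1:ℝ)^i * (n.choose i : ℝ) * g i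
      = (∑ k ∈ range (n+1), (-1:ℝ)^(k+1) * (n.choose (k+1) : ℝ) * g (k+1)) + g 0 := by
    rw [Finset.sum_range_succ' (fun i => (-1:ℝ)^i * (n.choose i : ℝ) * g i) n]
    rw [Finset.sum_range_succ (fun k => (-1:ℝ)^(k+1) * (n.choose (k+1) : ℝ) * g (k+1)) n]
    rw [Nat.choose_succ_self]
    simp
  have hR2 : ∑ i ∈ range (n+1), (-1:ℝ)^i * (n.choose i : ℝ) * (g i - g (i+1))
      = (∑ i ∈ range (n+1), (-1:ℝ)^i * (n.choose i : ℝ) * g i)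
        + ∑ i ∈ range (n+1), (-1:ℝ)^(i+1) * (n.choose i : ℝ) * g (i+1) := by
    rw [← Finset.sum_add_distrib]
    apply Finset.sum_congr rfl; intros; ring
  rw [hL, hR2, hR1]
  ring

lemma alt_sum_pow : ∀ (n r : ℕ), r < n → ∀ (t : ℝ),
    ∑ i ∈ range (n+1), (-1:ℝ)^i * (n.choose i : ℝ) * (t + i)^r = 0 := by
  intro n
  induction n with
  | zero => intro r hr; omega
  | succ n ih =>
    intro r hr t
    rw [show n + 1 + 1 = n + 2 from rfl, diff_step n (fun i => (t + i)^r)]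
    have key : ∀ i : ℕ, ((t+(i:ℕ))^r - (t+((i+1:ℕ):ℕ))^r : ℝ)
        = -∑ s ∈ range r, (r.choose s : ℝ) * (t+(i:ℕ))^s := by
      intro i
      have hb : (t + ((i+1:ℕ)) : ℝ) = (t+(i:ℕ)) + 1 := by push_cast; ring
      have gen : ∀ x : ℝ, x^r - (x+1)^r = -∑ s ∈ range r, (r.choose s : ℝ) * x^s := by
        intro x
        rw [add_pow, Finset.sum_range_succ]
        simp only [one_pow, Nat.choose_self, Nat.cast_one, mul_one]
        have : ∑ k ∈ range r, x^k * (r.choose k : ℝ) = ∑ s ∈ range r, (r.choose s : ℝ) * x^s :=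
          Finset.sum_congr rfl (by intros; ring)
        rw [this]; ring
      rw [hb, gen]
    calc ∑ i ∈ range (n+1), (-1:ℝ)^i * (n.choose i : ℝ) * ((t+(i:ℕ))^r - (t+((i+1:ℕ):ℕ))^r)
        = ∑ i ∈ range (n+1), ∑ s ∈ range r,
            -((r.choose s : ℝ) * ((-1:ℝ)^i * (n.choose i : ℝ) * (t+(i:ℕ))^s)) := by
          apply Finset.sum_congr rfl; intro i _
          rw [key i, mul_neg, Finset.mul_sum, ← Finset.sum_neg_distrib]
          apply Finset.sum_congr rfl; intros; ring
      _ = ∑ s ∈ range r, -((r.choose s : ℝ) *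
            ∑ i ∈ range (n+1), (-1:ℝ)^i * (n.choose i : ℝ) * (t+(i:ℕ))^s) := by
          rw [Finset.sum_comm]
          apply Finset.sum_congr rfl; intro s _
          rw [Finset.mul_sum, ← Finset.sum_neg_distrib]
      _ = 0 := by
          apply Finset.sum_eq_zero; intro s hs
          rw [ih s (by simp at hs; omega) t, mul_zero, neg_zero]

lemma sum_split4 (d : ℕ) (hd : 4 ≤ d) (f : ℕ → ℝ) :
    ∑ k ∈ range (d+1), f k = (f 0 + f 1 + f 2 + f 3) + ∑ k ∈ Icc 4 d, f k := by
  have h1 : ∑ i ∈ Ico 0 4, f i + ∑ i ∈ Ico 4 (d+1), f i = ∑ i ∈ Ico 0 (d+1), f i :=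
    Finset.sum_Ico_consecutive f (by omega) (by omega)
  have h2 : Ico 4 (d+1) = Icc 4 d := Finset.Ico_add_one_right_eq_Icc 4 d
  have h3 : range (d+1) = Ico 0 (d+1) := by rw [Finset.range_eq_Ico]
  have h4 : ∑ i ∈ Ico 0 4, f i = f 0 + f 1 + f 2 + f 3 := by
    rw [← Finset.range_eq_Ico]
    rw [Finset.sum_range_succ, Finset.sum_range_succ, Finset.sum_range_succ,
      Finset.sum_range_one]
  rw [h3, ← h1, h2, h4]

lemma r_eq (d : ℕ) (hd : 4 ≤ d) :
    ∑ k ∈ Icc 4 d, (k : ℝ) ^ (d - 3) * (d.choose k : ℝ) *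
        ((-1 : ℝ) ^ k * (9 * (k : ℝ) ^ 2 - 32 * (k : ℝ) + 24) + (k : ℝ) ^ 2)
      = ∑ j ∈ range (d+1), (d.choose j : ℝ) * (j : ℝ) ^ (d - 1) := by
  obtain ⟨e, rfl⟩ : ∃ e, d = e + 4 := ⟨d - 4, by omega⟩
  have h3 : e + 4 - 3 = e + 1 := by omega
  have h1 : e + 4 - 1 = e + 3 := by omega
  rw [h3, h1]
  -- the alternating sums vanish
  have halt : ∀ m : ℕ, m < e + 4 →
      ∑ k ∈ range (e+4+1), (-1:ℝ)^k * ((e+4).choose k : ℝ) * (k:ℝ)^m = 0 := by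
    intro m hm
    have := alt_sum_pow (e+4) m hm 0
    simpa using this
  set D := e + 4 with hD
  -- pointwise: LHS integrand = f k + h k
  set f : ℕ → ℝ := fun k => (D.choose k : ℝ) * (k:ℝ)^(e+3) with hf
  set h : ℕ → ℝ := fun k => (-1:ℝ)^k * (D.choose k : ℝ) *
      (9*(k:ℝ)^(e+3) - 32*(k:ℝ)^(e+2) + 24*(k:ℝ)^(e+1)) with hh
  have hpt : ∀ k : ℕ, (k : ℝ) ^ (e+1) * (D.choose k : ℝ) *
      ((-1 : ℝ) ^ k * (9 * (k : ℝ) ^ 2 - 32 * (k : ℝ) + 24) + (k : ℝ) ^ 2)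
      = f k + h k := by
    intro k; simp only [hf, hh]; ring
  have hsum_h : ∑ k ∈ range (D+1), h k = 0 := by
    have e1 := halt (e+3) (by omega)
    have e2 := halt (e+2) (by omega)
    have e3 := halt (e+1) (by omega)
    have expand : ∀ k : ℕ, h k = 9 * ((-1:ℝ)^k * (D.choose k : ℝ) * (k:ℝ)^(e+3))
        - 32 * ((-1:ℝ)^k * (D.choose k : ℝ) * (k:ℝ)^(e+2))
        + 24 * ((-1:ℝ)^k * (D.choose k : ℝ) * (k:ℝ)^(e+1)) := by
      intro k; simp only [hh]; ring
    rw [Finset.sum_congr rfl (fun k _ => expand k)]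
    rw [Finset.sum_add_distrib, Finset.sum_sub_distrib, ← Finset.mul_sum, ← Finset.mul_sum,
      ← Finset.mul_sum, e1, e2, e3]
    ring
  have hbd : f 0 + h 0 = 0 ∧ f 1 + h 1 = 0 ∧ f 2 + h 2 = 0 ∧ f 3 + h 3 = 0 := by
    refine ⟨?_, ?_, ?_, ?_⟩ <;>
      simp only [hf, hh] <;> push_cast <;>
      simp [zero_pow, pow_succ] <;> ring
  rw [Finset.sum_congr rfl (fun k _ => hpt k)]
  rw [Finset.sum_add_distrib]
  have hIccf : ∑ k ∈ Icc 4 D, f k = ∑ j ∈ range (D+1), f j - (f 0 + f 1 + f 2 + f 3) := by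
    rw [sum_split4 D (by omega) f]; ring
  have hIcch : ∑ k ∈ Icc 4 D, h k = - (h 0 + h 1 + h 2 + h 3) := by
    have := sum_split4 D (by omega) h
    rw [hsum_h] at this; linarith
  rw [hIccf, hIcch]
  have : ∑ j ∈ range (D+1), f j = ∑ j ∈ range (D+1), (D.choose j : ℝ) * (j:ℝ)^(e+3) := rfl
  rw [this]
  obtain ⟨b0, b1, b2, b3⟩ := hbd
  linarith


/-- The standard simplex `T^d = {x : xᵢ ≥ 0, ∑ xᵢ ≤ 1}`. -/
def simplexT (d : ℕ) : Set (Fin d → ℝ) := {x | (∀ i, 0 ≤ x i) ∧ ∑ i, x i ≤ 1}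

lemma sum_powerset_card {ι : Type*} [DecidableEq ι] (s : Finset ι) (h : ℕ → ℝ) :
    ∑ R ∈ s.powerset, h R.card = ∑ j ∈ range (s.card+1), (s.card.choose j : ℝ) * h j := by
  rw [Finset.sum_powerset]
  apply Finset.sum_congr rfl; intro j hj
  rw [Finset.sum_congr rfl (fun R hR => by rw [(Finset.mem_powersetCard.mp hR).2]),
    Finset.sum_const, Finset.card_powersetCard, nsmul_eq_mul]

set_option maxHeartbeats 1000000 in
/-- For `d ≥ 3` and every polynomial `p` of total degree at most `d - 1`, the supremum
of `|x₁⋯x_d - p(x)|` over `T^d` is at least `1/r_d`, where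
`r_d = d ∑_{k=4}^{d} k^{d-3} C(d,k) [(-1)^k (9k² - 32k + 24) + k²]`. -/
theorem best_approx_lower_bound_Td (d : ℕ) (hd : 3 ≤ d)
    (p : MvPolynomial (Fin d) ℝ) (hp : p.totalDegree ≤ d - 1) :
    1 / ((d : ℝ) * ∑ k ∈ Finset.Icc 4 d,
        (k : ℝ) ^ (d - 3) * (d.choose k : ℝ) *
          ((-1 : ℝ) ^ k * (9 * (k : ℝ) ^ 2 - 32 * (k : ℝ) + 24) + (k : ℝ) ^ 2)) ≤
      sSup ((fun x => |(∏ i, x i) - MvPolynomial.eval x p|) '' simplexT d) := by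
  have hdpos : (0:ℝ) < d := by exact_mod_cast (by omega : 0 < d)
  set F : (Fin d → ℝ) → ℝ := fun x => |(∏ i, x i) - MvPolynomial.eval x p| with hF
  set M := sSup (F '' simplexT d) with hM
  -- compactness and boundedness
  have hsub : simplexT d ⊆ Set.Icc (0 : Fin d → ℝ) 1 := by
    rintro x ⟨hx0, hx1⟩
    constructor
    · intro i; exact hx0 i
    · intro i
      calc x i ≤ ∑ j, x j := Finset.single_le_sum (fun j _ => hx0 j) (Finset.mem_univ i)
        _ ≤ 1 := hx1
  have hclosed : IsClosed (simplexT d) := by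
    have : simplexT d = (⋂ i, {x : Fin d → ℝ | 0 ≤ x i}) ∩ {x | ∑ i, x i ≤ 1} := by
      ext x; simp [simplexT, Set.mem_iInter]
    rw [this]
    exact IsClosed.inter
      (isClosed_iInter fun i => isClosed_le continuous_const (continuous_apply i))
      (isClosed_le (continuous_finset_sum _ fun i _ => continuous_apply i) continuous_const)
  have hcomp : IsCompact (simplexT d) := isCompact_Icc.of_isClosed_subset hclosed hsub
  have hcont : Continuous F :=
    ((continuous_finset_prod univ fun i _ => continuous_apply i).sub
      (MvPolynomial.continuous_eval p)).abs
  have hbdd : BddAbove (F '' simplexT d) := hcomp.bddAbove_image hcont.continuousOn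
  -- the points and weights
  set pt : Finset (Fin d) → (Fin d → ℝ) :=
    fun S => fun i => if i ∈ S then ((S.card : ℝ))⁻¹ else 0 with hptdef
  have hpt_mem : ∀ S : Finset (Fin d), pt S ∈ simplexT d := by
    intro S
    constructor
    · intro i; simp only [hptdef]
      split
      · positivity
      · exact le_refl 0
    · have : ∑ i, pt S i = (S.card : ℝ) * (S.card : ℝ)⁻¹ := by
        simp only [hptdef]
        rw [Finset.sum_ite_mem, Finset.univ_inter, Finset.sum_const, nsmul_eq_mul]
      rw [this]
      rcases eq_or_ne S.card 0 with h | h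
      · simp [h]
      · rw [mul_inv_cancel₀ (by exact_mod_cast h)]
  have hle : ∀ S : Finset (Fin d), F (pt S) ≤ M :=
    fun S => le_csSup hbdd ⟨pt S, hpt_mem S, rfl⟩
  have hM0 : 0 ≤ M := le_trans (abs_nonneg _) (hle ∅)
  set W : Finset (Fin d) → ℝ := fun S => (-1:ℝ)^S.card * (S.card : ℝ)^(d-1) with hW
  -- value on the product
  have hprod : ∑ S : Finset (Fin d), W S * ∏ i, pt S i = (-1:ℝ)^d * (d:ℝ)⁻¹ := by
    rw [Finset.sum_eq_single_of_mem (univ : Finset (Fin d)) (Finset.mem_univ _)]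
    · have hc : (univ : Finset (Fin d)).card = d := by simp
      have hpu : ∏ i, pt (univ : Finset (Fin d)) i = ((d:ℝ)⁻¹)^d := by
        simp only [hptdef, Finset.mem_univ, if_pos]
        rw [Finset.prod_const, hc]
      rw [hpu]
      have hkey : ((d:ℝ))^(d-1) * (((d:ℝ))⁻¹)^d = ((d:ℝ))⁻¹ := by
        obtain ⟨e, he⟩ : ∃ e, d = e + 3 := ⟨d - 3, by omega⟩
        have hne : ((e+3:ℕ):ℝ) ≠ 0 := by positivity
        rw [he, inv_pow]
        have h1 : e + 3 - 1 = e + 2 := by omega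
        rw [h1]
        field_simp
        ring
      have hWu : W (univ : Finset (Fin d)) = (-1:ℝ)^d * ((d:ℝ))^(d-1) := by
        simp only [hW, hc]
      rw [hWu, mul_assoc, hkey]
    · intro S _ hS
      have : ∃ i, i ∉ S := by
        by_contra h; push_neg at h
        exact hS (Finset.eq_univ_iff_forall.mpr h)
      obtain ⟨i, hi⟩ := this
      have : ∏ j, pt S j = 0 :=
        Finset.prod_eq_zero (Finset.mem_univ i) (by simp only [hptdef, hi, if_neg]; rfl)
      rw [this, mul_zero]
  -- annihilation of monomials of degree ≤ d-1
  have hmono : ∀ α : Fin d →₀ ℕ, (∑ i, α i) ≤ d - 1 →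
      ∑ S : Finset (Fin d), W S * ∏ i, (pt S i)^(α i) = 0 := by
    intro α hm
    set T := α.support with hT
    set t := T.card with ht
    set m := ∑ i, α i with hmdef
    have htm : t ≤ m := by
      have h1 : t = ∑ i ∈ T, 1 := by rw [ht, Finset.card_eq_sum_ones]
      have h2 : ∑ i ∈ T, 1 ≤ ∑ i ∈ T, α i :=
        Finset.sum_le_sum (fun i hi => Nat.one_le_iff_ne_zero.mpr (Finsupp.mem_support_iff.mp hi))
      have h3 : ∑ i ∈ T, α i ≤ ∑ i, α i :=
        Finset.sum_le_sum_of_subset (Finset.subset_univ T)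
      omega
    have htd : t ≤ d := le_trans (Finset.card_le_univ T) (by simp)
    have ht0 : t = 0 → m = 0 := by
      intro h
      have hTe : T = ∅ := Finset.card_eq_zero.mp h
      have hα : α = 0 := Finsupp.support_eq_empty.mp hTe
      rw [hmdef, hα]; simp
    have hprod2 : ∀ S : Finset (Fin d), ∏ i, (pt S i)^(α i)
        = if T ⊆ S then ((S.card:ℝ)⁻¹)^m else 0 := by
      intro S
      split
      · rename_i hTS
        have hptw : ∀ i : Fin d, (pt S i)^(α i) = ((S.card:ℝ)⁻¹)^(α i) := by
          intro i
          by_cases hi : i ∈ S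
          · simp only [hptdef, hi, if_pos]
          · have hz : α i = 0 := by
              by_contra hne
              exact hi (hTS (Finsupp.mem_support_iff.mpr hne))
            simp only [hptdef, hi, if_neg, hz, pow_zero]
        rw [Finset.prod_congr rfl (fun i _ => hptw i), Finset.prod_pow_eq_pow_sum]
      · rename_i hTS
        obtain ⟨i, hiT, hiS⟩ := Finset.not_subset.mp hTS
        refine Finset.prod_eq_zero (Finset.mem_univ i) ?_
        have hz : α i ≠ 0 := Finsupp.mem_support_iff.mp hiT
        simp only [hptdef, hiS, if_neg]
        exact zero_pow hz
    rw [Finset.sum_congr rfl (fun S _ => by rw [hprod2 S])]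
    set hfun : ℕ → ℝ :=
      fun j => (-1:ℝ)^(j+t) * ((j+t : ℕ) : ℝ)^(d-1) * (((j+t : ℕ) : ℝ)⁻¹)^m with hhfun
    have step1 : ∑ S : Finset (Fin d), W S * (if T ⊆ S then ((S.card:ℝ)⁻¹)^m else 0)
        = ∑ S ∈ univ.filter (fun S => T ⊆ S), W S * ((S.card:ℝ)⁻¹)^m := by
      rw [Finset.sum_filter]
      apply Finset.sum_congr rfl
      intro S _
      split <;> simp
    rw [step1]
    have step2 : ∑ S ∈ univ.filter (fun S => T ⊆ S), W S * ((S.card:ℝ)⁻¹)^m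
        = ∑ R ∈ Tᶜ.powerset, hfun R.card := by
      apply Finset.sum_nbij' (fun S => S \ T) (fun R => R ∪ T)
      · intro S hS
        simp only [Finset.mem_powerset]
        exact fun x hx => by
          simp only [Finset.mem_compl]
          exact (Finset.mem_sdiff.mp hx).2
      · intro R hR
        simp
      · intro S hS
        exact Finset.sdiff_union_of_subset (Finset.mem_filter.mp hS).2
      · intro R hR
        refine Finset.union_sdiff_cancel_right ?_
        rw [Finset.disjoint_right]
        intro x hxT hxR
        exact (Finset.mem_compl.mp ((Finset.mem_powerset.mp hR) hxR)) hxT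
      · intro S hS
        have hTS := (Finset.mem_filter.mp hS).2
        have hcard : (S \ T).card + t = S.card := by
          rw [ht, Finset.card_sdiff_of_subset hTS]
          have := Finset.card_le_card hTS
          omega
        simp only [hW, hhfun]
        rw [hcard]
    rw [step2, sum_powerset_card]
    have hcompl : Tᶜ.card = d - t := by
      rw [Finset.card_compl, ht]
      simp
    set n := Tᶜ.card with hn
    set r := (d - 1) - m with hr
    have hrn : r < n := by rw [hr, hcompl]; omega
    have hpoint : ∀ j ∈ range (n+1),
        (n.choose j : ℝ) * hfun j
        = (-1:ℝ)^t * ((-1:ℝ)^j * (n.choose j : ℝ) * (((t:ℕ):ℝ) + j)^r) := by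
      intro j _
      simp only [hhfun]
      rcases Nat.eq_zero_or_pos (j + t) with hjt | hjt
      · have hj0 : j = 0 := by omega
        have ht0' : t = 0 := by omega
        have hm0 : m = 0 := ht0 ht0'
        have hre : r = d - 1 := by omega
        subst hj0
        rw [ht0', hre]
        rw [show ((0:ℕ) + 0 : ℕ) = 0 from rfl]
        push_cast
        rw [zero_pow (by omega : d - 1 ≠ 0)]
        rw [show ((0:ℝ) + 0) = 0 by ring]
        rw [zero_pow (by omega : d - 1 ≠ 0)]
        ring
      · have hJne : (((j+t : ℕ) : ℝ)) ≠ 0 := by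
          have : (0:ℕ) < j + t := hjt
          exact_mod_cast Nat.pos_iff_ne_zero.mp this
        have hpow : ((j+t : ℕ) : ℝ)^(d-1) * (((j+t : ℕ) : ℝ)⁻¹)^m = ((j+t : ℕ) : ℝ)^r := by
          rw [inv_pow, show d-1 = r + m by rw [hr]; omega, pow_add, mul_assoc,
            mul_inv_cancel₀ (pow_ne_zero _ hJne), mul_one]
        have hcast : ((j+t : ℕ) : ℝ) = ((t:ℕ):ℝ) + j := by push_cast; ring
        rw [mul_assoc ((-1:ℝ)^(j+t)), hpow, hcast, pow_add]
        ring
    rw [Finset.sum_congr rfl hpoint, ← Finset.mul_sum]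
    rw [alt_sum_pow n r hrn ((t:ℕ):ℝ), mul_zero]
  -- annihilation of p
  have hzero : ∑ S : Finset (Fin d), W S * MvPolynomial.eval (pt S) p = 0 := by
    have heval : ∀ S : Finset (Fin d), MvPolynomial.eval (pt S) p
        = ∑ α ∈ p.support, MvPolynomial.coeff α p * ∏ i, (pt S i)^(α i) :=
      fun S => MvPolynomial.eval_eq' (pt S) p
    rw [Finset.sum_congr rfl (fun S _ => by rw [heval S, Finset.mul_sum])]
    rw [Finset.sum_comm]
    apply Finset.sum_eq_zero
    intro α hα
    have hdeg : (∑ i, α i) ≤ d - 1 := by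
      have h1 := MvPolynomial.le_totalDegree hα
      have h2 : (α.sum fun _ n => n) = ∑ i, α i := Finsupp.sum_fintype _ _ (fun _ => rfl)
      rw [h2] at h1
      omega
    have hz := hmono α hdeg
    calc ∑ S : Finset (Fin d), W S * (MvPolynomial.coeff α p * ∏ i, (pt S i)^(α i))
        = MvPolynomial.coeff α p * ∑ S : Finset (Fin d), W S * ∏ i, (pt S i)^(α i) := by
          rw [Finset.mul_sum]
          apply Finset.sum_congr rfl; intros; ring
      _ = 0 := by rw [hz, mul_zero]
  -- the norm sum
  set N : ℝ := ∑ j ∈ range (d+1), (d.choose j : ℝ) * (j:ℝ)^(d-1) with hNdef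
  have hNsum : ∑ S : Finset (Fin d), ((S.card : ℝ))^(d-1) = N := by
    rw [← Finset.powerset_univ, sum_powerset_card (univ : Finset (Fin d)) (fun j => (j:ℝ)^(d-1))]
    simp [hNdef]
  have hNpos : 0 < N := by
    rw [hNdef]
    apply Finset.sum_pos'
    · intro j _; positivity
    · refine ⟨1, Finset.mem_range.mpr (by omega), ?_⟩
      have h1 : (0:ℝ) < d := hdpos
      simp [Nat.choose_one_right]
      positivity
  -- main inequality
  have hLsum : ∑ S : Finset (Fin d), W S * ((∏ i, pt S i) - MvPolynomial.eval (pt S) p)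
      = (-1:ℝ)^d * (d:ℝ)⁻¹ := by
    rw [Finset.sum_congr rfl (fun S _ => mul_sub (W S) _ _), Finset.sum_sub_distrib,
      hprod, hzero, sub_zero]
  have habs : 1/(d:ℝ) ≤ N * M := by
    have e1 : (1:ℝ)/(d:ℝ) = |(-1:ℝ)^d * (d:ℝ)⁻¹| := by
      rw [abs_mul, abs_pow, abs_neg, abs_one, one_pow, one_mul, abs_inv,
        abs_of_pos hdpos, one_div]
    rw [e1, ← hLsum]
    calc |∑ S : Finset (Fin d), W S * ((∏ i, pt S i) - MvPolynomial.eval (pt S) p)|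
        ≤ ∑ S : Finset (Fin d), |W S * ((∏ i, pt S i) - MvPolynomial.eval (pt S) p)| :=
          Finset.abs_sum_le_sum_abs _ _
      _ ≤ ∑ S : Finset (Fin d), ((S.card : ℝ))^(d-1) * M := by
          apply Finset.sum_le_sum
          intro S _
          rw [abs_mul]
          have hWabs : |W S| = ((S.card : ℝ))^(d-1) := by
            simp only [hW]
            rw [abs_mul, abs_pow, abs_neg, abs_one, one_pow, one_mul, abs_pow,
              abs_of_nonneg (by positivity : (0:ℝ) ≤ (S.card:ℝ))]
          rw [hWabs]
          exact mul_le_mul_of_nonneg_left (hle S) (by positivity)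
      _ = N * M := by rw [← Finset.sum_mul, hNsum]
  -- finish
  rcases Nat.lt_or_ge d 4 with h4 | h4
  · have hempty : Finset.Icc 4 d = ∅ := Finset.Icc_eq_empty (by omega)
    rw [hempty, Finset.sum_empty, mul_zero, div_zero]
    exact hM0
  · rw [r_eq d h4, ← hNdef]
    rw [div_le_iff₀ (mul_pos hdpos hNpos)]
    calc (1:ℝ) = (d:ℝ) * (1/(d:ℝ)) := by field_simp
      _ ≤ (d:ℝ) * (N * M) := mul_le_mul_of_nonneg_left habs (le_of_lt hdpos)
      _ = M * ((d:ℝ) * N) := by ring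
end
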